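/- arXiv:2504.01820 — 2 statements merged into one kernel-verified Lean document; each statement's English description precedes it below -/
import Mathlib

section
/- Suppose a probability vector (p_i) over distinct reals (φ_i) maximizes the variance ∑ p_i φ_i² − (∑ p_i φ_i)² subject to ∑ p_i = 1, p_i ≥ 0, and the values φ_i are not all equal. Then at most two distinct values φ_i have p_i > 0. -/
/-!
If a maximizer `p` charged three distinct values `φᵢ, φⱼ, φₖ`, move mass along
`e = (φⱼ - φₖ) δᵢ + (φₖ - φᵢ) δⱼ + (φᵢ - φⱼ) δₖ`. For small `|t|` of either sign `p + t e` stays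
in the simplex, and since `e` preserves total mass and mean, the variance of `p + t e` is
`Var p + t ∑ eᵢ φᵢ²`, affine in `t`. Maximality at `t = 0` forces the slope
`∑ eᵢ φᵢ² = (φᵢ - φⱼ)(φⱼ - φₖ)(φᵢ - φₖ)` to vanish.
-/

open Filter Topology

section Variance

variable {ι : Type*} [Fintype ι]

def weightedVariance (q φ : ι → ℝ) : ℝ := q ⬝ᵥ φ ^ 2 - (q ⬝ᵥ φ) ^ 2

lemma weightedVariance_add_smul {p e φ : ι → ℝ} (he : e ⬝ᵥ φ = 0) (t : ℝ) :
    weightedVariance (p + t • e) φ = weightedVariance p φ + t * (e ⬝ᵥ φ ^ 2) := by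
  simp only [weightedVariance, add_dotProduct, smul_dotProduct, he, smul_eq_mul]
  ring

lemma eventually_nonneg_add_smul {p e : ι → ℝ} (hp : 0 ≤ p) (he : ∀ i, e i ≠ 0 → 0 < p i) :
    ∀ᶠ t in 𝓝 (0 : ℝ), 0 ≤ p + t • e := by
  simp only [Pi.le_def, eventually_all]
  intro i
  by_cases hei : e i = 0
  · simpa [hei] using hp i
  · have hcont : Continuous fun t : ℝ => p i + t * e i := by fun_prop
    filter_upwards [continuousAt_const.eventually_lt hcont.continuousAt (by simpa using he i hei)]
      with t ht
    simpa using ht.le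

lemma IsMaxOn.dotProduct_sq_eq_zero {p e φ : ι → ℝ}
    (hmax : IsMaxOn (weightedVariance · φ) (stdSimplex ℝ ι) p) (hp : p ∈ stdSimplex ℝ ι)
    (he₀ : ∑ i, e i = 0) (he₁ : e ⬝ᵥ φ = 0) (hsupp : ∀ i, e i ≠ 0 → 0 < p i) :
    e ⬝ᵥ φ ^ 2 = 0 := by
  have hlocal : IsLocalMax (fun t : ℝ => weightedVariance (p + t • e) φ) 0 := by
    filter_upwards [eventually_nonneg_add_smul hp.1 hsupp] with t ht
    have hsum : ∑ x, (p + t • e) x = 1 := by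
      simp [Finset.sum_add_distrib, ← Finset.mul_sum, he₀, hp.2]
    simpa using hmax ⟨ht, hsum⟩
  refine hlocal.hasDerivAt_eq_zero ?_
  simp only [weightedVariance_add_smul he₁]
  simpa using ((hasDerivAt_id (0 : ℝ)).mul_const (e ⬝ᵥ φ ^ 2)).const_add (weightedVariance p φ)

end Variance

section ThreePointDirection

variable {ι : Type*} [DecidableEq ι] (φ : ι → ℝ) (i j k : ι)

def threePointDirection : ι → ℝ :=
  Pi.single i (φ j - φ k) + Pi.single j (φ k - φ i) + Pi.single k (φ i - φ j)

lemma eq_or_eq_or_eq_of_threePointDirection_ne_zero {x : ι}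
    (hx : threePointDirection φ i j k x ≠ 0) : x = i ∨ x = j ∨ x = k := by
  by_contra! h
  simp [threePointDirection, h.1, h.2.1, h.2.2] at hx

variable [Fintype ι]

lemma threePointDirection_dotProduct (f : ι → ℝ) :
    threePointDirection φ i j k ⬝ᵥ f =
      (φ j - φ k) * f i + (φ k - φ i) * f j + (φ i - φ j) * f k := by
  simp only [threePointDirection, add_dotProduct, single_dotProduct]

lemma sum_threePointDirection : ∑ x, threePointDirection φ i j k x = 0 := by
  rw [← dotProduct_one, threePointDirection_dotProduct]
  simp

lemma threePointDirection_dotProduct_self : threePointDirection φ i j k ⬝ᵥ φ = 0 := by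
  rw [threePointDirection_dotProduct]
  ring

lemma threePointDirection_dotProduct_sq :
    threePointDirection φ i j k ⬝ᵥ φ ^ 2 = (φ i - φ j) * (φ j - φ k) * (φ i - φ k) := by
  rw [threePointDirection_dotProduct]
  simp only [Pi.pow_apply]
  ring

end ThreePointDirection

lemma IsMaxOn.eq_or_eq_or_eq_of_pos {ι : Type*} [Fintype ι] {p φ : ι → ℝ}
    (hmax : IsMaxOn (weightedVariance · φ) (stdSimplex ℝ ι) p) (hp : p ∈ stdSimplex ℝ ι)
    {i j k : ι} (hi : 0 < p i) (hj : 0 < p j) (hk : 0 < p k) :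
    φ i = φ j ∨ φ j = φ k ∨ φ i = φ k := by
  classical
  have hsupp : ∀ x, threePointDirection φ i j k x ≠ 0 → 0 < p x := by
    intro x hx
    obtain rfl | rfl | rfl := eq_or_eq_or_eq_of_threePointDirection_ne_zero φ i j k hx
    exacts [hi, hj, hk]
  have hslope := hmax.dotProduct_sq_eq_zero hp (sum_threePointDirection φ i j k)
    (threePointDirection_dotProduct_self φ i j k) hsupp
  simpa [threePointDirection_dotProduct_sq, sub_eq_zero, or_assoc] using hslope

theorem maximizer_support_at_most_two_general (M : ℕ) (φ p : Fin M → ℝ)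
    (hp : ∀ i, 0 ≤ p i) (hsum : ∑ i, p i = 1)
    (hmax : ∀ q : Fin M → ℝ, (∀ i, 0 ≤ q i) → ∑ i, q i = 1 →
      ∑ i, q i * φ i ^ 2 - (∑ i, q i * φ i) ^ 2 ≤
        ∑ i, p i * φ i ^ 2 - (∑ i, p i * φ i) ^ 2) :
    ((Finset.univ.filter fun i => 0 < p i).image φ).card ≤ 2 := by
  have hmax' : IsMaxOn (weightedVariance · φ) (stdSimplex ℝ (Fin M)) p :=
    isMaxOn_iff.2 fun q hq => hmax q hq.1 hq.2
  by_contra! hcard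
  obtain ⟨_, _, _, hi, hj, hk, hij, hik, hjk⟩ := Finset.two_lt_card_iff.1 hcard
  simp only [Finset.mem_image, Finset.mem_filter, Finset.mem_univ, true_and] at hi hj hk
  obtain ⟨i, hi, rfl⟩ := hi
  obtain ⟨j, hj, rfl⟩ := hj
  obtain ⟨k, hk, rfl⟩ := hk
  rcases hmax'.eq_or_eq_or_eq_of_pos ⟨hp, hsum⟩ hi hj hk with h | h | h <;> contradiction

theorem maximizer_support_at_most_two (M : ℕ) (φ p : Fin M → ℝ)
    (hφ : Function.Injective φ)
    (hnc : ∃ i j, φ i ≠ φ j)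
    (hp : ∀ i, 0 ≤ p i) (hsum : ∑ i, p i = 1)
    (hmax : ∀ q : Fin M → ℝ, (∀ i, 0 ≤ q i) → ∑ i, q i = 1 →
      ∑ i, q i * φ i ^ 2 - (∑ i, q i * φ i) ^ 2 ≤
        ∑ i, p i * φ i ^ 2 - (∑ i, p i * φ i) ^ 2) :
    ((Finset.univ.filter fun i => 0 < p i).image φ).card ≤ 2 :=
  maximizer_support_at_most_two_general M φ p hp hsum hmax
end

section
/- Let X be a random variable taking values in a finite set S ⊆ ℝ. If Var(X) = (1/4)(max S − min S)² and max S > min S, then P(X = min S) = P(X = max S) = 1/2. -/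
/-!
For `a ≤ x ≤ b` one has `(x - a) * (b - x) ≥ 0`, and averaging this against `p` gives the exact
identity `Var = ((b - a) / 2) ^ 2 - (μ - (a + b) / 2) ^ 2 - E[(X - a) * (b - X)]`
(Popoviciu's inequality with its defect terms). Maximal variance makes both defects vanish:
`p` lives on `{a, b}` and the mean is the midpoint, which pins both masses to `1 / 2`.
-/

open Finset

namespace Finset

variable (s : Finset ℝ) (p : ℝ → ℝ)

theorem sum_mul_sq_sub_sq_sum_mul_eq (hsum : ∑ x ∈ s, p x = 1) (a b : ℝ) :
    ∑ x ∈ s, p x * x ^ 2 - (∑ x ∈ s, p x * x) ^ 2 =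
      ((b - a) / 2) ^ 2 - (∑ x ∈ s, p x * x - (a + b) / 2) ^ 2 -
        ∑ x ∈ s, p x * ((x - a) * (b - x)) := by
  have expand : ∀ x ∈ s, p x * ((x - a) * (b - x)) =
      (a + b) * (p x * x) - a * b * p x - p x * x ^ 2 := fun x _ => by ring
  rw [sum_congr rfl expand, sum_sub_distrib, sum_sub_distrib, ← mul_sum, ← mul_sum, hsum]
  ring

variable {s p}

theorem mean_eq_midpoint_and_mul_eq_zero_of_variance_eq {a b : ℝ}
    (hp : ∀ x ∈ s, 0 ≤ p x) (hsum : ∑ x ∈ s, p x = 1) (hs : ∀ x ∈ s, x ∈ Set.Icc a b)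
    (hvar : ∑ x ∈ s, p x * x ^ 2 - (∑ x ∈ s, p x * x) ^ 2 = ((b - a) / 2) ^ 2) :
    ∑ x ∈ s, p x * x = (a + b) / 2 ∧ ∀ x ∈ s, p x * ((x - a) * (b - x)) = 0 := by
  have hterm : ∀ x ∈ s, 0 ≤ p x * ((x - a) * (b - x)) := fun x hx =>
    mul_nonneg (hp x hx) (mul_nonneg (sub_nonneg.2 (hs x hx).1) (sub_nonneg.2 (hs x hx).2))
  have hdefect := sum_nonneg hterm
  rw [sum_mul_sq_sub_sq_sum_mul_eq s p hsum a b] at hvar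
  have hmean : (∑ x ∈ s, p x * x - (a + b) / 2) ^ 2 = 0 := by
    nlinarith [sq_nonneg (∑ x ∈ s, p x * x - (a + b) / 2)]
  refine ⟨by linarith [pow_eq_zero_iff (n := 2) two_ne_zero |>.1 hmean], ?_⟩
  rw [← sum_eq_zero_iff_of_nonneg hterm]
  linarith

theorem sum_eq_add_of_eq_zero_of_ne {a b : ℝ} (ha : a ∈ s) (hb : b ∈ s) (hab : a ≠ b)
    (hzero : ∀ x ∈ s, x ≠ a → x ≠ b → p x = 0) (f : ℝ → ℝ) :
    ∑ x ∈ s, p x * f x = p a * f a + p b * f b := by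
  rw [← sum_pair (f := fun x => p x * f x) hab]
  refine (sum_subset (by simp [insert_subset_iff, ha, hb]) fun x hx hxab => ?_).symm
  simp only [mem_insert, mem_singleton, not_or] at hxab
  rw [hzero x hx hxab.1 hxab.2, zero_mul]

end Finset

theorem eq_half_of_add_eq_one_of_mul_add_mul_eq_midpoint {a b u v : ℝ} (hab : a ≠ b)
    (hsum : u + v = 1) (hmean : u * a + v * b = (a + b) / 2) : u = 1 / 2 ∧ v = 1 / 2 := by
  have hv : v * (b - a) = 1 / 2 * (b - a) := by linear_combination hmean - a * hsum
  have hv' : v = 1 / 2 := mul_right_cancel₀ (sub_ne_zero.2 hab.symm) hv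
  exact ⟨by linarith, hv'⟩

theorem variance_eq_forces_half_half (s : Finset ℝ) (hs : s.Nonempty)
    (p : ℝ → ℝ) (hp : ∀ x ∈ s, 0 ≤ p x) (hsum : ∑ x ∈ s, p x = 1)
    (hlt : s.min' hs < s.max' hs)
    (hvar : ∑ x ∈ s, p x * x ^ 2 - (∑ x ∈ s, p x * x) ^ 2 =
      (1 / 4) * (s.max' hs - s.min' hs) ^ 2) :
    p (s.min' hs) = 1 / 2 ∧ p (s.max' hs) = 1 / 2 := by
  set a := s.min' hs
  set b := s.max' hs
  have hIcc : ∀ x ∈ s, x ∈ Set.Icc a b := fun x hx => ⟨s.min'_le x hx, s.le_max' x hx⟩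
  obtain ⟨hmean, hdefect⟩ := mean_eq_midpoint_and_mul_eq_zero_of_variance_eq hp hsum hIcc
    (by rw [hvar]; ring)
  have hzero : ∀ x ∈ s, x ≠ a → x ≠ b → p x = 0 := fun x hx hxa hxb => by
    have hpos : 0 < (x - a) * (b - x) := mul_pos
      (sub_pos.2 ((hIcc x hx).1.lt_of_ne' hxa)) (sub_pos.2 ((hIcc x hx).2.lt_of_ne hxb))
    exact (mul_eq_zero.1 (hdefect x hx)).resolve_right hpos.ne'
  have hendpoints := sum_eq_add_of_eq_zero_of_ne (s.min'_mem hs) (s.max'_mem hs) hlt.ne hzero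
  refine eq_half_of_add_eq_one_of_mul_add_mul_eq_midpoint hlt.ne ?_ ?_
  · simpa [hsum] using (hendpoints fun _ => 1).symm
  · simpa [hmean] using (hendpoints id).symm
end
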